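/- End(H_p) is isomorphic as a ring to the quotient R_p / K, where K = {(a_{ij}) ∈ R_p : p^{e_i} ∣ a_{ij} for all i, j}. -/

import Mathlib

/-!
An endomorphism `φ` of `∏ i, ZMod (m i)` is determined by the images of the unit vectors, so it
is given by an integer matrix `A` with `φ (Pi.single j 1) i = A i j mod m i`; conversely an
integer matrix acts on `∏ i, ZMod (m i)` through `v ↦ A v` on integer lifts exactly when
`m i ∣ A i j * m j` for all `i, j`, and it acts as zero exactly when `m i ∣ A i j`. For
`m i = p ^ e i` with `e` monotone and `p ≠ 0` the first condition is membership in `R_p` and the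
second is membership in `K`, so `R_p → End(H_p)` is a surjective ring map with kernel `K`.
-/

/-- The subring `R_p` of integer matrices with `p ^ (e i - e j) ∣ A i j` for `j ≤ i`. -/
def Rp (p n : ℕ) (e : Fin n → ℕ) (he : Monotone e) :
    Subring (Matrix (Fin n) (Fin n) ℤ) where
  carrier := {A | ∀ i j, j ≤ i → ((p : ℤ) ^ (e i - e j)) ∣ A i j}
  zero_mem' := by intro i j _; simp
  one_mem' := by
    intro i j hji
    rcases eq_or_ne i j with rfl | hne
    · simp
    · simp [Matrix.one_apply, hne]
  add_mem' := by
    intro A B hA hB i j h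
    simpa [Matrix.add_apply] using dvd_add (hA i j h) (hB i j h)
  neg_mem' := by
    intro A hA i j h
    simpa [Matrix.neg_apply] using (hA i j h).neg_right
  mul_mem' := by
    intro A B hA hB i j hji
    rw [Matrix.mul_apply]
    refine Finset.dvd_sum fun k _ => ?_
    rcases le_total k j with hk | hk
    · exact dvd_mul_of_dvd_left
        ((pow_dvd_pow _ (Nat.sub_le_sub_left (he hk) _)).trans (hA i k (hk.trans hji))) _
    · rcases le_total k i with hki | hki
      · have h3 : (p : ℤ) ^ (e i - e j) ∣ (p : ℤ) ^ (e i - e k) * (p : ℤ) ^ (e k - e j) := by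
          rw [← pow_add]
          apply pow_dvd_pow
          have := he hki; have := he hk; omega
        exact h3.trans (mul_dvd_mul (hA i k hki) (hB k j hk))
      · exact dvd_mul_of_dvd_right
          ((pow_dvd_pow _ (Nat.sub_le_sub_right (he hki) _)).trans (hB k j hk)) _

/-- The two-sided ideal `K = {A ∈ R_p : p ^ (e i) ∣ A i j for all i, j}`. -/
def Kideal (p n : ℕ) (e : Fin n → ℕ) (he : Monotone e) :
    TwoSidedIdeal (Rp p n e he) :=
  TwoSidedIdeal.mk'
    {A | ∀ i j, ((p : ℤ) ^ e i) ∣ (A : Matrix (Fin n) (Fin n) ℤ) i j}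
    (by intro i j; simp)
    (by
      intro x y hx hy i j
      push_cast
      simpa [Matrix.add_apply] using dvd_add (hx i j) (hy i j))
    (by
      intro x hx i j
      push_cast
      simpa [Matrix.neg_apply] using (hx i j).neg_right)
    (by
      intro x y hy i j
      have hx : ∀ i j, j ≤ i → ((p : ℤ) ^ (e i - e j)) ∣ (x : Matrix (Fin n) (Fin n) ℤ) i j :=
        x.2
      show ((p : ℤ) ^ e i) ∣ ((x : Matrix (Fin n) (Fin n) ℤ) * (y : Matrix (Fin n) (Fin n) ℤ)) i j
      rw [Matrix.mul_apply]
      refine Finset.dvd_sum fun k _ => ?_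
      rcases le_total k i with hk | hk
      · refine dvd_trans ?_ (mul_dvd_mul (hx i k hk) (hy k j))
        rw [← pow_add]
        apply pow_dvd_pow
        have := he hk; omega
      · exact dvd_mul_of_dvd_right ((pow_dvd_pow _ (he hk)).trans (hy k j)) _)
    (by
      intro x y hx i j
      show ((p : ℤ) ^ e i) ∣ ((x : Matrix (Fin n) (Fin n) ℤ) * (y : Matrix (Fin n) (Fin n) ℤ)) i j
      rw [Matrix.mul_apply]
      exact Finset.dvd_sum fun k _ => dvd_mul_of_dvd_left (hx i k) _)

theorem pow_sub_dvd_iff_pow_dvd_mul_pow {M : Type*} [CommMonoidWithZero M] [IsCancelMulZero M]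
    {x a : M} (hx : x ≠ 0) {k l : ℕ} (hlk : l ≤ k) : x ^ (k - l) ∣ a ↔ x ^ k ∣ a * x ^ l := by
  rw [← mul_dvd_mul_iff_right (pow_ne_zero l hx), ← pow_add, Nat.sub_add_cancel hlk]

theorem TwoSidedIdeal.ker_ringCon_eq {R S : Type*} [NonAssocRing R] [NonAssocSemiring S]
    (f : R →+* S) : (TwoSidedIdeal.ker f).ringCon = RingCon.ker f :=
  RingCon.ext fun _ _ => Iff.rfl

namespace ZMod

def liftMulLeft {m n : ℕ} (a : ℤ) (h : (n : ℤ) ∣ a * m) : ZMod m →+ ZMod n :=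
  lift m ⟨(Int.castAddHom _).comp (AddMonoidHom.mulLeft a),
    (intCast_zmod_eq_zero_iff_dvd (a * m) n).mpr h⟩

@[simp]
theorem liftMulLeft_intCast {m n : ℕ} (a : ℤ) (h : (n : ℤ) ∣ a * m) (k : ℤ) :
    liftMulLeft a h k = ((a * k : ℤ) : ZMod n) :=
  lift_coe _ _ k

end ZMod

namespace ZModPi

open Matrix

variable {ι : Type*} (m : ι → ℕ)

def reduce : (ι → ℤ) →+ ∀ i, ZMod (m i) :=
  AddMonoidHom.pi fun i => (Int.castAddHom (ZMod (m i))).comp (Pi.evalAddMonoidHom _ i)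

@[simp]
theorem reduce_apply (v : ι → ℤ) (i : ι) : reduce m v i = v i := rfl

theorem reduce_surjective : Function.Surjective (reduce m) := by
  intro x
  choose v hv using fun i => ZMod.intCast_surjective (x i)
  exact ⟨v, funext hv⟩

theorem reduce_eq_zero_iff (v : ι → ℤ) : reduce m v = 0 ↔ ∀ i, (m i : ℤ) ∣ v i := by
  simp [funext_iff, ZMod.intCast_zmod_eq_zero_iff_dvd]

theorem nsmul_reduce_single_one [DecidableEq ι] (j : ι) :
    m j • reduce m (Pi.single j 1) = 0 := by
  funext i
  rcases eq_or_ne i j with rfl | hij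
  · simp
  · simp [hij]

variable {m} in
theorem ext_reduce {f g : AddMonoid.End (∀ i, ZMod (m i))}
    (h : ∀ v, f (reduce m v) = g (reduce m v)) : f = g :=
  AddMonoidHom.ext ((reduce_surjective m).forall.mpr h)

variable [Fintype ι] [DecidableEq ι]

def compatibleMatrices : Subring (Matrix ι ι ℤ) where
  carrier := {A | ∀ i j, (m i : ℤ) ∣ A i j * m j}
  zero_mem' := by simp
  one_mem' i j := by
    rcases eq_or_ne i j with rfl | hij
    · simp
    · simp [hij]
  add_mem' hA hB i j := by simpa [add_mul] using dvd_add (hA i j) (hB i j)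
  neg_mem' hA i j := by simpa using hA i j
  mul_mem' {A B} hA hB i j := by
    simp only [mul_apply, Finset.sum_mul]
    refine Finset.dvd_sum fun k _ => ?_
    obtain ⟨c, hc⟩ := hB k j
    rw [mul_assoc, hc, ← mul_assoc]
    exact (hA i k).mul_right c

variable {m}

def endOfMatrix (A : compatibleMatrices m) : AddMonoid.End (∀ i, ZMod (m i)) :=
  AddMonoidHom.mk' (fun x i => ∑ j, ZMod.liftMulLeft (A.1 i j) (A.2 i j) (x j)) fun x y => by
    funext i
    simp [Finset.sum_add_distrib]

theorem endOfMatrix_reduce (A : compatibleMatrices m) (v : ι → ℤ) :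
    endOfMatrix A (reduce m v) = reduce m (A.1 *ᵥ v) := by
  funext i
  change ∑ j, ZMod.liftMulLeft (A.1 i j) (A.2 i j) (reduce m v j) = _
  simp [mulVec, dotProduct]

def toEnd : compatibleMatrices m →+* AddMonoid.End (∀ i, ZMod (m i)) where
  toFun := endOfMatrix
  map_one' := ext_reduce fun v => by simp [endOfMatrix_reduce]
  map_mul' A B := ext_reduce fun v => by simp [endOfMatrix_reduce, mulVec_mulVec]
  map_zero' := ext_reduce fun v => by simp [endOfMatrix_reduce]
  map_add' A B := ext_reduce fun v => by
    change _ = endOfMatrix A (reduce m v) + endOfMatrix B (reduce m v)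
    simp [endOfMatrix_reduce, add_mulVec]

theorem toEnd_apply_reduce (A : compatibleMatrices m) (v : ι → ℤ) :
    toEnd A (reduce m v) = reduce m (A.1 *ᵥ v) :=
  endOfMatrix_reduce A v

theorem toEnd_eq_zero_iff (A : compatibleMatrices m) :
    toEnd A = 0 ↔ ∀ i j, (m i : ℤ) ∣ A.1 i j := by
  have hzero : toEnd A = 0 ↔ ∀ v, reduce m (A.1 *ᵥ v) = 0 := by
    simp only [← toEnd_apply_reduce]
    exact ⟨fun h v => by rw [h]; rfl, fun h => ext_reduce h⟩
  simp only [hzero, reduce_eq_zero_iff]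
  refine ⟨fun h i j => by simpa using h (Pi.single j 1) i, fun h v i => ?_⟩
  exact Finset.dvd_sum fun j _ => (h i j).mul_right (v j)

theorem apply_reduce_eq_of_single {φ : AddMonoid.End (∀ i, ZMod (m i))} {A : Matrix ι ι ℤ}
    (hA : ∀ j, φ (reduce m (Pi.single j 1)) = reduce m (A *ᵥ Pi.single j 1)) (v : ι → ℤ) :
    φ (reduce m v) = reduce m (A *ᵥ v) := by
  have hcomp : AddMonoidHom.comp φ (reduce m) = (reduce m).comp (mulVecLin A).toAddMonoidHom := by
    ext j : 1
    exact AddMonoidHom.ext_int (hA j)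
  exact DFunLike.congr_fun hcomp v

theorem toEnd_surjective : Function.Surjective (toEnd (m := m)) := by
  intro φ
  obtain ⟨A, hA⟩ : ∃ A : Matrix ι ι ℤ,
      ∀ i j, (A i j : ZMod (m i)) = φ (reduce m (Pi.single j 1)) i := by
    choose A hA using fun i j => ZMod.intCast_surjective (φ (reduce m (Pi.single j 1)) i)
    exact ⟨of A, hA⟩
  have hsingle : ∀ j, φ (reduce m (Pi.single j 1)) = reduce m (A *ᵥ Pi.single j 1) := fun j => by
    funext i
    simp [hA]
  have hmem : A ∈ compatibleMatrices m := fun i j => by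
    have h := congrFun (congrArg φ (nsmul_reduce_single_one m j)) i
    rw [map_nsmul, map_zero, hsingle] at h
    rw [← ZMod.intCast_zmod_eq_zero_iff_dvd]
    simpa [mulVec_single_one, mul_comm] using h
  refine ⟨⟨A, hmem⟩, ext_reduce fun v => ?_⟩
  rw [toEnd_apply_reduce, apply_reduce_eq_of_single hsingle]

end ZModPi

theorem Rp_eq_compatibleMatrices {p n : ℕ} (hp : p ≠ 0) {e : Fin n → ℕ} (he : Monotone e) :
    Rp p n e he = ZModPi.compatibleMatrices fun i => p ^ e i := by
  ext A
  change (∀ i j, j ≤ i → (p : ℤ) ^ (e i - e j) ∣ A i j) ↔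
    ∀ i j, ((p ^ e i : ℕ) : ℤ) ∣ A i j * (p ^ e j : ℕ)
  push_cast
  refine forall₂_congr fun i j => ?_
  by_cases hji : j ≤ i
  · simp [hji, pow_sub_dvd_iff_pow_dvd_mul_pow (Int.natCast_ne_zero.mpr hp) (he hji)]
  · simp only [hji, false_imp_iff, true_iff]
    exact dvd_mul_of_dvd_right (pow_dvd_pow _ (he (not_le.mp hji).le)) _

def Rp.toEnd {p n : ℕ} (hp : p ≠ 0) {e : Fin n → ℕ} (he : Monotone e) :
    Rp p n e he →+* AddMonoid.End (∀ i, ZMod (p ^ e i)) :=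
  ZModPi.toEnd.comp (RingEquiv.subringCongr (Rp_eq_compatibleMatrices hp he)).toRingHom

theorem Rp.toEnd_surjective {p n : ℕ} (hp : p ≠ 0) {e : Fin n → ℕ} (he : Monotone e) :
    Function.Surjective (Rp.toEnd hp he) :=
  ZModPi.toEnd_surjective.comp (RingEquiv.surjective _)

theorem Kideal_eq_ker {p n : ℕ} (hp : p ≠ 0) {e : Fin n → ℕ} (he : Monotone e) :
    Kideal p n e he = TwoSidedIdeal.ker (Rp.toEnd hp he) := by
  refine TwoSidedIdeal.ext fun A => (TwoSidedIdeal.mem_mk' ..).trans ?_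
  rw [TwoSidedIdeal.mem_ker, Rp.toEnd, RingHom.comp_apply, ZModPi.toEnd_eq_zero_iff]
  push_cast
  rfl

theorem stmt_10_general (p n : ℕ) (hp : p.Prime) (e : Fin n → ℕ)
    (he : Monotone e) :
    Nonempty
      (AddMonoid.End (∀ i : Fin n, ZMod (p ^ e i)) ≃+*
        (Kideal p n e he).ringCon.Quotient) := by
  rw [Kideal_eq_ker hp.ne_zero he, TwoSidedIdeal.ker_ringCon_eq]
  exact ⟨(RingCon.quotientKerEquivOfSurjective _ (Rp.toEnd_surjective hp.ne_zero he)).symm⟩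

/-- `End(H_p)` is isomorphic as a ring to the quotient `R_p / K`,
where `K = {A ∈ R_p : p ^ (e i) ∣ A i j for all i, j}`. -/
theorem stmt_10 (p n : ℕ) (hp : p.Prime) (e : Fin n → ℕ)
    (he1 : ∀ i, 1 ≤ e i) (he : Monotone e) :
    Nonempty
      (AddMonoid.End (∀ i : Fin n, ZMod (p ^ e i)) ≃+*
        (Kideal p n e he).ringCon.Quotient) :=
  stmt_10_general p n hp e he
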